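/- If every route in a network has direction sequence drawn from the regular pattern E^a N^b E^c S^d with d ≤ 1, then the union of all route edges forms a directed acyclic graph on the grid's directed links; in particular deterministic routing with such routes is deadlock-free. -/

import Mathlib

/-- The four cardinal unit moves on ℤ × ℤ. -/
inductive Dir
  | N | S | E | W
deriving DecidableEq

/-- Unit displacement vector of a move. -/
def Dir.vec : Dir → ℤ × ℤ
  | .N => (0, 1)
  | .S => (0, -1)
  | .E => (1, 0)
  | .W => (-1, 0)

/-- A directed link of the grid: a node together with an outgoing direction. -/
abbrev Link := (ℤ × ℤ) × Dir

/-- The sequence of directed links used by a route starting at `s` with move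
    sequence `ms` (the i-th link starts at the i-th visited node). -/
def linksOf (s : ℤ × ℤ) (ms : List Dir) : List Link :=
  (ms.scanl (fun p d => p + d.vec) s).zip ms

/-- A route whose moves consist of a block of East moves, then North moves,
    then East moves, then at most one South move. -/
def IsPattern (ms : List Dir) : Prop :=
  ∃ a b c d : ℕ, d ≤ 1 ∧
    ms = List.replicate a Dir.E ++ List.replicate b Dir.N ++
      List.replicate c Dir.E ++ List.replicate d Dir.S

/-- The channel dependency relation induced by a set of routes: link `l1`
    depends on link `l2` if some route uses `l2` immediately after `l1`. -/
def ChannelDep (R : Set ((ℤ × ℤ) × List Dir)) (l1 l2 : Link) : Prop :=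
  ∃ r ∈ R, ∃ i : ℕ,
    (linksOf r.1 r.2)[i]? = some l1 ∧ (linksOf r.1 r.2)[i + 1]? = some l2

lemma linksOf_cons (s : ℤ × ℤ) (m : Dir) (ms : List Dir) :
    linksOf s (m :: ms) = (s, m) :: linksOf (s + m.vec) ms := by
  simp [linksOf, List.scanl]

lemma linksOf_consec : ∀ (ms : List Dir) (s : ℤ × ℤ) (i : ℕ) (p1 p2 : ℤ × ℤ) (d1 d2 : Dir),
    (linksOf s ms)[i]? = some (p1, d1) → (linksOf s ms)[i+1]? = some (p2, d2) →
    p2 = p1 + d1.vec ∧ ms[i]? = some d1 ∧ ms[i+1]? = some d2 := by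
  intro ms
  induction ms with
  | nil => intro s i p1 p2 d1 d2 h1 _; simp [linksOf] at h1
  | cons m ms ih =>
    intro s i p1 p2 d1 d2 h1 h2
    rw [linksOf_cons] at h1 h2
    cases i with
    | zero =>
      simp at h1
      obtain ⟨hp1, hd1⟩ := h1
      cases ms with
      | nil => simp [linksOf] at h2
      | cons m2 ms' =>
        rw [linksOf_cons] at h2
        simp at h2
        refine ⟨?_, ?_, ?_⟩ <;> simp [← hp1, ← hd1, h2.1, h2.2]
    | succ n =>
      simp only [List.getElem?_cons_succ] at h1 h2
      exact ih _ _ _ _ _ _ h1 h2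

lemma pattern_move (ms : List Dir) (h : IsPattern ms) (i : ℕ) (d1 d2 : Dir)
    (h1 : ms[i]? = some d1) (h2 : ms[i+1]? = some d2) :
    d1 = Dir.E ∨ d1 = Dir.N := by
  obtain ⟨a, b, c, d, hd, rfl⟩ := h
  interval_cases d
  · have hm : d1 ∈ List.replicate a Dir.E ++ List.replicate b Dir.N ++
        List.replicate c Dir.E ++ List.replicate 0 Dir.S := List.mem_of_getElem? h1
    simp [List.mem_replicate] at hm
    tauto
  · have hlen := List.getElem?_eq_some_iff.mp h2
    obtain ⟨hi, _⟩ := hlen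
    simp at hi
    set L := List.replicate a Dir.E ++ List.replicate b Dir.N ++ List.replicate c Dir.E with hL
    have hlenL : L.length = a + b + c := by simp [hL]; omega
    have hiL : i < L.length := by omega
    have : (L ++ List.replicate 1 Dir.S)[i]? = L[i]? := List.getElem?_append_left hiL
    have heq : (List.replicate a Dir.E ++ List.replicate b Dir.N ++
        List.replicate c Dir.E ++ List.replicate 1 Dir.S) = L ++ List.replicate 1 Dir.S := by
      simp [hL, List.append_assoc]
    rw [heq, this] at h1
    have hm : d1 ∈ L := List.mem_of_getElem? h1
    simp [hL, List.mem_replicate] at hm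
    tauto

def rank (l : Link) : ℤ ×ₗ ℤ := toLex (l.1.2, l.1.1)

lemma channelDep_rank (R : Set ((ℤ × ℤ) × List Dir))
    (hR : ∀ r ∈ R, IsPattern r.2) (l1 l2 : Link) (h : ChannelDep R l1 l2) :
    rank l1 < rank l2 := by
  obtain ⟨r, hr, i, h1, h2⟩ := h
  obtain ⟨p1, d1⟩ := l1
  obtain ⟨p2, d2⟩ := l2
  obtain ⟨hp2, hm1, hm2⟩ := linksOf_consec r.2 r.1 i p1 p2 d1 d2 h1 h2
  rcases pattern_move r.2 (hR r hr) i d1 d2 hm1 hm2 with h | h <;> subst h <;> subst hp2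
  · have h2 : rank (p1 + Dir.E.vec, d2) = toLex (p1.2, p1.1 + 1) := by
      simp [rank, Dir.vec, Prod.ext_iff]
    have h1 : rank (p1, Dir.E) = toLex (p1.2, p1.1) := rfl
    rw [h1, h2]
    exact Prod.Lex.right _ (lt_add_one _)
  · have h2 : rank (p1 + Dir.N.vec, d2) = toLex (p1.2 + 1, p1.1) := by
      simp [rank, Dir.vec, Prod.ext_iff]
    have h1 : rank (p1, Dir.N) = toLex (p1.2, p1.1) := rfl
    rw [h1, h2]
    exact Prod.Lex.left _ _ (lt_add_one _)

/-- If every route in a network has direction sequence drawn from the pattern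
    E^a N^b E^c S^d with d ≤ 1, then the channel dependency graph on the
    grid's directed links is acyclic; by Duato/Dally–Seitz theory,
    deterministic routing with such routes is therefore deadlock-free. -/
theorem pattern_routes_cdg_acyclic (R : Set ((ℤ × ℤ) × List Dir))
    (hR : ∀ r ∈ R, IsPattern r.2) :
    ∀ l : Link, ¬ Relation.TransGen (ChannelDep R) l l := by
  intro l hl
  have : Relation.TransGen (fun a b : Link => rank a < rank b) l l :=
    Relation.TransGen.mono (p := fun a b : Link => rank a < rank b) (fun a b h => channelDep_rank R hR a b h) l l hl
  rw [@Relation.transGen_eq_self _ (fun a b : Link => rank a < rank b)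
    ⟨fun _ _ _ hab hbc => lt_trans hab hbc⟩] at this
  exact lt_irrefl _ this
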